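/- If φ is a context formula for c with respect to 𝕊, then for every t ≥ 1 the probability of c at time t with respect to K = ((μ, T), 𝕊) satisfies P_K(c[t]) = Σ over worlds W satisfying φ of μ_t(W). -/

import Mathlib

open scoped ENNReal

namespace BL

variable {I A C V : Type*}

/-- A world `W` satisfies the context `κ` if it agrees with `κ` wherever it is defined. -/
def SatCtx (W : V → Bool) (κ : V → Option Bool) : Prop :=
  ∀ v b, κ v = some b → W v = b

/-- The ontology induced by the world `W` from the `V`-ontology `𝕊`. -/
def OW (𝕊 : Finset (A × (V → Option Bool))) (W : V → Bool) : Set A :=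
  {α | ∃ κ, (α, κ) ∈ 𝕊 ∧ SatCtx W κ}

/-- `i` is a model of the ontology `O`. -/
def IsOntModel (satA : I → A → Prop) (O : Set A) (i : I) : Prop :=
  ∀ α ∈ O, satA i α

/-- The ontology `O` entails the consequence `c`. -/
def Entails (satA : I → A → Prop) (satC : I → C → Prop) (O : Set A) (c : C) : Prop :=
  ∀ i : I, IsOntModel satA O i → satC i c

/-- A probabilistic interpretation `p` (a finitely supported PMF on pairs of an
interpretation and a world) is a model of the knowledge base `(PB, 𝕊)`. -/
def IsKBModel (satA : I → A → Prop) (PB : PMF (V → Bool))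
    (𝕊 : Finset (A × (V → Option Bool))) (p : PMF (I × (V → Bool))) : Prop :=
  p.support.Finite ∧
    (∀ iW ∈ p.support, IsOntModel satA (OW 𝕊 iW.2) iW.1) ∧
    ∀ W : V → Bool, ∑' i : I, p (i, W) = PB W

/-- `P_p(c)`: the probability of the consequence `c` w.r.t. `p`. -/
noncomputable def Pp (satC : I → C → Prop) (p : PMF (I × (V → Bool))) (c : C) : ℝ≥0∞ :=
  ∑' iW : I × (V → Bool), {x : I × (V → Bool) | satC x.1 c}.indicator (⇑p) iW

/-- `P_K(c)`: the infimum of `P_p(c)` over all models `p` of the knowledge base. -/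
noncomputable def PK (satA : I → A → Prop) (satC : I → C → Prop) (PB : PMF (V → Bool))
    (𝕊 : Finset (A × (V → Option Bool))) (c : C) : ℝ≥0∞ :=
  sInf {x : ℝ≥0∞ | ∃ p : PMF (I × (V → Bool)), IsKBModel satA PB 𝕊 p ∧ x = Pp satC p c}

/-- The `t`-th marginal of the DBN `(μ, T)` (0-indexed: `marg μ T 0 = μ_1 = μ`,
and `marg μ T n = μ_{n+1}` with `μ_{t+1}(W') = Σ_W μ_t(W)·T(W)(W')`). -/
noncomputable def marg (μ : PMF (V → Bool)) (T : (V → Bool) → PMF (V → Bool)) :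
    ℕ → PMF (V → Bool)
  | 0 => μ
  | n + 1 => (marg μ T n).bind T

/-- A timed probabilistic interpretation `(p_t)_{t ≥ 1}` is a model of the dynamic
knowledge base `((μ, T), 𝕊)` if for every `t ≥ 1`, `p t` is a model of `(μ_t, 𝕊)`. -/
def IsTimedModel (satA : I → A → Prop) (μ : PMF (V → Bool))
    (T : (V → Bool) → PMF (V → Bool)) (𝕊 : Finset (A × (V → Option Bool)))
    (p : ℕ → PMF (I × (V → Bool))) : Prop :=
  ∀ t : ℕ, 1 ≤ t → IsKBModel satA (marg μ T (t - 1)) 𝕊 (p t)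

/-- `P_K(c[t])`: the infimum of `P_{p_t}(c)` over all timed models of the dynamic KB. -/
noncomputable def PKtime (satA : I → A → Prop) (satC : I → C → Prop)
    (μ : PMF (V → Bool)) (T : (V → Bool) → PMF (V → Bool))
    (𝕊 : Finset (A × (V → Option Bool))) (c : C) (t : ℕ) : ℝ≥0∞ :=
  sInf {x : ℝ≥0∞ | ∃ p : ℕ → PMF (I × (V → Bool)),
    IsTimedModel satA μ T 𝕊 p ∧ x = Pp satC (p t) c}

/-!
A timed model of `K` only constrains each time separately, so at time `t` it is an arbitrary
model of the static knowledge base `(μ_t, 𝕊)`, the other times being filled by any models.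
In the static case, a model `p` has world-marginal `μ_t` and puts mass only on pairs `(i, W)`
with `i ⊨ O_W`; hence all the mass over worlds `W` with `O_W ⊨ c` lies on interpretations
satisfying `c`, which bounds `P_p(c)` from below. The bound is attained by the model that puts the
whole mass of each world `W` on a single model of `O_W`, chosen to falsify `c` whenever `O_W ⊭ c`.
-/

theorem _root_.PMF.map_snd_apply {α β : Type*} (p : PMF (α × β)) (b : β) :
    p.map Prod.snd b = ∑' a, p (a, b) := by
  rw [PMF.map_apply, ENNReal.tsum_prod', ENNReal.tsum_comm, tsum_eq_single b]
  · simp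
  · intro b' hb'
    simp [Ne.symm hb']

theorem Pp_eq_toOuterMeasure (satC : I → C → Prop) (p : PMF (I × (V → Bool))) (c : C) :
    Pp satC p c = p.toOuterMeasure {x | satC x.1 c} :=
  (p.toOuterMeasure_apply _).symm

section KnowledgeBase

variable {satA : I → A → Prop} {satC : I → C → Prop} {ν : PMF (V → Bool)}
  {𝕊 : Finset (A × (V → Option Bool))}

theorem IsKBModel.map_snd {p : PMF (I × (V → Bool))} (hp : IsKBModel satA ν 𝕊 p) :
    p.map Prod.snd = ν :=
  PMF.ext fun W => (p.map_snd_apply W).trans (hp.2.2 W)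

theorem IsKBModel.toOuterMeasure_entails_le_Pp {p : PMF (I × (V → Bool))}
    (hp : IsKBModel satA ν 𝕊 p) (c : C) :
    ν.toOuterMeasure {W | Entails satA satC (OW 𝕊 W) c} ≤ Pp satC p c := by
  rw [Pp_eq_toOuterMeasure, ← hp.map_snd, PMF.toOuterMeasure_map_apply]
  refine p.toOuterMeasure_mono ?_
  rintro ⟨i, W⟩ ⟨hent, hsupp⟩
  exact hent i (hp.2.1 _ hsupp)

theorem isKBModel_map_graph [Finite V] {g : (V → Bool) → I}
    (hg : ∀ W, IsOntModel satA (OW 𝕊 W) (g W)) (ν : PMF (V → Bool)) :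
    IsKBModel satA ν 𝕊 (ν.map fun W => (g W, W)) := by
  rw [IsKBModel, PMF.support_map]
  refine ⟨(Set.toFinite _).image _, ?_, fun W => ?_⟩
  · rintro _ ⟨W, -, rfl⟩
    exact hg W
  · rw [← PMF.map_snd_apply, PMF.map_comp]
    exact DFunLike.congr_fun ν.map_id W

theorem Pp_map_graph (g : (V → Bool) → I) (ν : PMF (V → Bool)) (c : C) :
    Pp satC (ν.map fun W => (g W, W)) c = ν.toOuterMeasure {W | satC (g W) c} := by
  rw [Pp_eq_toOuterMeasure, PMF.toOuterMeasure_map_apply]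
  rfl

theorem exists_isKBModel [Finite V] (hmod : ∀ W, ∃ i, IsOntModel satA (OW 𝕊 W) i)
    (ν : PMF (V → Bool)) : ∃ p, IsKBModel satA ν 𝕊 p := by
  choose g hg using hmod
  exact ⟨_, isKBModel_map_graph hg ν⟩

theorem exists_isOntModel_satC_iff_entails {O : Set A} (h : ∃ i, IsOntModel satA O i) (c : C) :
    ∃ i, IsOntModel satA O i ∧ (satC i c ↔ Entails satA satC O c) := by
  by_cases hent : Entails satA satC O c
  · obtain ⟨i, hi⟩ := h
    exact ⟨i, hi, iff_of_true (hent i hi) hent⟩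
  · obtain ⟨i, hi, hc⟩ : ∃ i, IsOntModel satA O i ∧ ¬ satC i c := by
      simpa [Entails] using hent
    exact ⟨i, hi, iff_of_false hc hent⟩

theorem PK_eq_toOuterMeasure_entails [Finite V]
    (hmod : ∀ W, ∃ i, IsOntModel satA (OW 𝕊 W) i) (ν : PMF (V → Bool)) (c : C) :
    PK satA satC ν 𝕊 c = ν.toOuterMeasure {W | Entails satA satC (OW 𝕊 W) c} := by
  choose g hg hgc using fun W => exists_isOntModel_satC_iff_entails (satC := satC) (hmod W) c
  refine le_antisymm (sInf_le ⟨_, isKBModel_map_graph hg ν, ?_⟩) (le_sInf ?_)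
  · rw [Pp_map_graph]
    exact congrArg ν.toOuterMeasure (Set.ext hgc).symm
  · rintro _ ⟨p, hp, rfl⟩
    exact hp.toOuterMeasure_entails_le_Pp c

theorem PKtime_eq_PK {μ : PMF (V → Bool)} {T : (V → Bool) → PMF (V → Bool)}
    (hex : ∀ s, ∃ p, IsKBModel satA (marg μ T s) 𝕊 p) (c : C) {t : ℕ} (ht : 1 ≤ t) :
    PKtime satA satC μ T 𝕊 c t = PK satA satC (marg μ T (t - 1)) 𝕊 c := by
  unfold PKtime PK
  congr 1
  ext x
  constructor
  · rintro ⟨p, hp, rfl⟩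
    exact ⟨p t, hp t ht, rfl⟩
  · rintro ⟨p, hp, rfl⟩
    choose q hq using hex
    refine ⟨Function.update (fun s => q (s - 1)) t p, fun s _ => ?_, by simp⟩
    rcases eq_or_ne s t with rfl | hst
    · simpa using hp
    · simpa [hst] using hq (s - 1)

end KnowledgeBase

/-- if `φ` is a context formula for `c` w.r.t. `𝕊`, then for every `t ≥ 1`,
`P_K(c[t]) = Σ_{W ⊨ φ} μ_t(W)`. -/
theorem timed_entailment_context_formula [Fintype V]
    (satA : I → A → Prop) (satC : I → C → Prop)
    (μ : PMF (V → Bool)) (T : (V → Bool) → PMF (V → Bool))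
    (𝕊 : Finset (A × (V → Option Bool))) (c : C)
    (φ : (V → Bool) → Prop)
    (hφ : ∀ W : V → Bool, Entails satA satC (OW 𝕊 W) c ↔ φ W)
    (t : ℕ) (ht : 1 ≤ t)
    (hmod : ∀ W : V → Bool, ∃ i : I, IsOntModel satA (OW 𝕊 W) i) :
    PKtime satA satC μ T 𝕊 c t
      = ∑' W : V → Bool, {W : V → Bool | φ W}.indicator (⇑(marg μ T (t - 1))) W := by
  have hset : {W | Entails satA satC (OW 𝕊 W) c} = {W | φ W} := Set.ext hφ
  rw [PKtime_eq_PK (fun s => exists_isKBModel hmod _) c ht, PK_eq_toOuterMeasure_entails hmod,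
    PMF.toOuterMeasure_apply, hset]

end BL
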